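/- Coupon collector tail bound: Let X_1, X_2, ... be i.i.d. uniform random variables on Fin n (n ≥ 1), and let τ = min { t : {X_1,...,X_t} = Fin n } be the first time all n values have appeared. Then for every c > 0, P(τ > ⌈n·log n + c·n⌉) ≤ e^{-c}. -/

import Mathlib

/-! A coupon that is still missing after `t` draws was missed by every draw; by independence
this happens with probability `(1 - 1/n)^t ≤ exp (-t/n)`. A union bound over the `n` coupons
gives `n exp (-t/n)`, which is at most `exp (-c)` once `t ≥ n log n + c n`. -/

open MeasureTheory ProbabilityTheory

/-- The coupon collector time: the first `t` such that all values of `Fin n`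
appear among the first `t` draws `X 0, …, X (t-1)` (and `⊤` if this never happens). -/
noncomputable def coverTime {n : ℕ} {Ω : Type*} (X : ℕ → Ω → Fin n) (ω : Ω) : ℕ∞ :=
  sInf {t : ℕ∞ | ∃ s : ℕ, (s : ℕ∞) = t ∧ ∀ k : Fin n, ∃ i < s, X i ω = k}

theorem setOf_lt_coverTime_subset {n : ℕ} {Ω : Type*} (X : ℕ → Ω → Fin n) (t : ℕ) :
    {ω | (t : ℕ∞) < coverTime X ω} ⊆ ⋃ k, ⋂ i ∈ Finset.range t, (X i ⁻¹' {k})ᶜ := by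
  intro ω hω
  have hmissed : ¬ ∀ k : Fin n, ∃ i < t, X i ω = k := fun hcover ↦
    (show coverTime X ω ≤ t from sInf_le ⟨t, rfl, hcover⟩).not_gt hω
  push Not at hmissed
  obtain ⟨k, hk⟩ := hmissed
  exact Set.mem_iUnion.2 ⟨k, Set.mem_iInter₂.2 fun i hi ↦ hk i (Finset.mem_range.1 hi)⟩

theorem measure_biInter_preimage_compl_singleton {Ω β : Type*} [MeasurableSpace Ω]
    [MeasurableSpace β] [MeasurableSingletonClass β] {μ : Measure Ω} [IsProbabilityMeasure μ]
    {X : ℕ → Ω → β} (hmeas : ∀ i, Measurable (X i)) (hindep : iIndepFun X μ)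
    {b : β} {p : ENNReal} (hp : ∀ i, μ (X i ⁻¹' {b}) = p) (t : ℕ) :
    μ (⋂ i ∈ Finset.range t, (X i ⁻¹' {b})ᶜ) = (1 - p) ^ t := by
  have hmiss (i : ℕ) : μ (X i ⁻¹' {b})ᶜ = 1 - p := by
    rw [prob_compl_eq_one_sub ((measurableSet_singleton b).preimage (hmeas i)), hp i]
  rw [hindep.meas_biInter (s := fun i ↦ (X i ⁻¹' {b})ᶜ)
    fun i _ ↦ ⟨{b}ᶜ, (measurableSet_singleton b).compl, rfl⟩]
  simp only [hmiss, Finset.prod_const, Finset.card_range]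

theorem measure_lt_coverTime_le {n : ℕ} {Ω : Type*} [MeasurableSpace Ω] {μ : Measure Ω}
    [IsProbabilityMeasure μ] {X : ℕ → Ω → Fin n} (hmeas : ∀ i, Measurable (X i))
    (hindep : iIndepFun X μ) (hunif : ∀ i k, μ (X i ⁻¹' {k}) = (n : ENNReal)⁻¹) (t : ℕ) :
    μ {ω | (t : ℕ∞) < coverTime X ω} ≤ n * (1 - (n : ENNReal)⁻¹) ^ t :=
  calc μ {ω | (t : ℕ∞) < coverTime X ω}
      ≤ ∑ k, μ (⋂ i ∈ Finset.range t, (X i ⁻¹' {k})ᶜ) :=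
        (measure_mono (setOf_lt_coverTime_subset X t)).trans (measure_iUnion_fintype_le _ _)
    _ = n * (1 - (n : ENNReal)⁻¹) ^ t := by
        simp only [measure_biInter_preimage_compl_singleton hmeas hindep (hunif · _),
          Finset.sum_const, Finset.card_univ, Fintype.card_fin, nsmul_eq_mul]

open Real in
theorem Real.natCast_mul_one_sub_inv_pow_le_exp {n t : ℕ} {c : ℝ}
    (ht : n * log n + c * n ≤ t) : n * (1 - (n : ℝ)⁻¹) ^ t ≤ exp (-c) := by
  rcases n.eq_zero_or_pos with rfl | hn
  · simp [exp_nonneg]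
  have hnR : (0 : ℝ) < n := by exact_mod_cast hn
  calc (n : ℝ) * (1 - (n : ℝ)⁻¹) ^ t
      ≤ n * exp (-(n : ℝ)⁻¹) ^ t := by
        gcongr
        · exact sub_nonneg.2 (inv_le_one_of_one_le₀ (by exact_mod_cast hn))
        · linarith [add_one_le_exp (-(n : ℝ)⁻¹)]
    _ = exp (log n - t / n) := by
        rw [exp_sub, ← exp_nat_mul, exp_log hnR, mul_neg, exp_neg, div_eq_mul_inv, div_eq_mul_inv]
    _ ≤ exp (-c) := by
        gcongr
        rw [sub_le_iff_le_add, ← sub_le_iff_le_add', le_div_iff₀ hnR]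
        linarith

theorem ENNReal.natCast_mul_one_sub_inv_pow_le_exp {n t : ℕ} {c : ℝ}
    (ht : n * Real.log n + c * n ≤ t) :
    n * (1 - (n : ENNReal)⁻¹) ^ t ≤ ENNReal.ofReal (Real.exp (-c)) := by
  rcases n.eq_zero_or_pos with rfl | hn
  · simp
  have hofReal : 1 - (n : ENNReal)⁻¹ = ENNReal.ofReal (1 - (n : ℝ)⁻¹) := by
    rw [ENNReal.ofReal_sub _ (by positivity), ENNReal.ofReal_one,
      ENNReal.ofReal_inv_of_pos (by exact_mod_cast hn), ENNReal.ofReal_natCast]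
  rw [hofReal, ← ENNReal.ofReal_pow (sub_nonneg.2 (inv_le_one_of_one_le₀ (by exact_mod_cast hn))),
    ← ENNReal.ofReal_natCast, ← ENNReal.ofReal_mul n.cast_nonneg]
  exact ENNReal.ofReal_le_ofReal (Real.natCast_mul_one_sub_inv_pow_le_exp ht)

theorem stmt_4_general {Ω : Type*} [MeasurableSpace Ω] (μ : Measure Ω)
    [IsProbabilityMeasure μ] (n : ℕ)
    (X : ℕ → Ω → Fin n) (hmeas : ∀ i, Measurable (X i))
    (hindep : iIndepFun X μ)
    (hunif : ∀ i, ∀ k : Fin n, μ (X i ⁻¹' {k}) = (n : ENNReal)⁻¹)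
    (c : ℝ) :
    μ {ω | ((⌈(n : ℝ) * Real.log n + c * n⌉₊ : ℕ) : ℕ∞) < coverTime X ω} ≤
      ENNReal.ofReal (Real.exp (-c)) :=
  (measure_lt_coverTime_le hmeas hindep hunif _).trans
    (ENNReal.natCast_mul_one_sub_inv_pow_le_exp (Nat.le_ceil _))

theorem stmt_4 {Ω : Type*} [MeasurableSpace Ω] (μ : Measure Ω)
    [IsProbabilityMeasure μ] (n : ℕ) (hn : 1 ≤ n)
    (X : ℕ → Ω → Fin n) (hmeas : ∀ i, Measurable (X i))
    (hindep : iIndepFun X μ)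
    (hunif : ∀ i, ∀ k : Fin n, μ (X i ⁻¹' {k}) = (n : ENNReal)⁻¹)
    (c : ℝ) (hc : 0 < c) :
    μ {ω | ((⌈(n : ℝ) * Real.log n + c * n⌉₊ : ℕ) : ℕ∞) < coverTime X ω} ≤
      ENNReal.ofReal (Real.exp (-c)) :=
  stmt_4_general μ n X hmeas hindep hunif c
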